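/- Let T = (T_1,...,T_k) be {0,1}-valued random variables and let Z be a random variable with values in a finite set, all on a common probability space. Suppose that for some δ ≥ 0 and every i in {1,...,k}, H(T_i | T_1,...,T_{i−1}, Z) ≥ 1 − δ. Then for every subset A of {1,...,k}, the mutual information between the subtuple T[A^c] and the pair (T[A], Z) satisfies I(T[A^c]; (T[A], Z)) ≤ k·δ. -/
import Mathlib


open Finset

/-- Probability that the random variable `X` takes the value `a`, under the
probability mass function `p` on the finite sample space `Ω`. -/
noncomputable def probOf {Ω α : Type*} [Fintype Ω] [Fintype α] [DecidableEq α]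
    (p : Ω → ℝ) (X : Ω → α) (a : α) : ℝ :=
  ∑ ω, if X ω = a then p ω else 0

/-- Shannon entropy (base 2) of the random variable `X`. -/
noncomputable def entropy {Ω α : Type*} [Fintype Ω] [Fintype α] [DecidableEq α]
    (p : Ω → ℝ) (X : Ω → α) : ℝ :=
  -∑ a, probOf p X a * Real.logb 2 (probOf p X a)

/-- Conditional entropy `H(X|Y)` (base 2). -/
noncomputable def condEntropy {Ω α β : Type*} [Fintype Ω] [Fintype α] [Fintype β]
    [DecidableEq α] [DecidableEq β] (p : Ω → ℝ) (X : Ω → α) (Y : Ω → β) : ℝ :=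
  entropy p (fun ω => (X ω, Y ω)) - entropy p Y

/-- Mutual information `I(X;Y)` (base 2). -/
noncomputable def mutualInfo {Ω α β : Type*} [Fintype Ω] [Fintype α] [Fintype β]
    [DecidableEq α] [DecidableEq β] (p : Ω → ℝ) (X : Ω → α) (Y : Ω → β) : ℝ :=
  entropy p X + entropy p Y - entropy p (fun ω => (X ω, Y ω))

/-- Conditional mutual information `I(X;Y|Z)` (base 2). -/
noncomputable def condMutualInfo {Ω α β γ : Type*} [Fintype Ω] [Fintype α] [Fintype β]
    [Fintype γ] [DecidableEq α] [DecidableEq β] [DecidableEq γ]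
    (p : Ω → ℝ) (X : Ω → α) (Y : Ω → β) (Z : Ω → γ) : ℝ :=
  entropy p (fun ω => (X ω, Z ω)) + entropy p (fun ω => (Y ω, Z ω))
    - entropy p (fun ω => (X ω, Y ω, Z ω)) - entropy p Z

set_option linter.unusedSectionVars false
set_option maxHeartbeats 1000000

section aux
variable {Ω α β γ : Type*} [Fintype Ω] [Fintype α] [Fintype β] [Fintype γ]
  [DecidableEq α] [DecidableEq β] [DecidableEq γ] (p : Ω → ℝ)

lemma probOf_nonneg (hp : ∀ ω, 0 ≤ p ω) (X : Ω → α) (a : α) : 0 ≤ probOf p X a :=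
  Finset.sum_nonneg fun ω _ => by split <;> simp [hp ω]

lemma sum_probOf (X : Ω → α) : ∑ a, probOf p X a = ∑ ω, p ω := by
  unfold probOf
  rw [Finset.sum_comm]
  exact Finset.sum_congr rfl fun ω _ => by simp

lemma probOf_comp {f : α → β} (hf : Function.Injective f) (X : Ω → α) (a : α) :
    probOf p (fun ω => f (X ω)) (f a) = probOf p X a := by
  unfold probOf
  exact Finset.sum_congr rfl fun ω _ => by simp [hf.eq_iff]

lemma probOf_comp_notMem {f : α → β} (X : Ω → α) {b : β} (hb : ∀ a, f a ≠ b) :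
    probOf p (fun ω => f (X ω)) b = 0 :=
  Finset.sum_eq_zero fun ω _ => if_neg (hb (X ω))

lemma entropy_comp {f : α → β} (hf : Function.Injective f) (X : Ω → α) :
    entropy p (fun ω => f (X ω)) = entropy p X := by
  unfold entropy
  congr 1
  rw [← Finset.sum_subset (Finset.subset_univ (Finset.image f Finset.univ))
    (fun b _ hb => by
      rw [probOf_comp_notMem p X (fun a hab => hb (Finset.mem_image.2 ⟨a, Finset.mem_univ a, hab⟩))]
      simp)]
  rw [Finset.sum_image (fun a _ a' _ h => hf h)]
  exact Finset.sum_congr rfl fun a _ => by rw [probOf_comp p hf]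
end aux

section gibbs
variable {ι : Type*} [Fintype ι]

lemma gibbs (q m : ι → ℝ) (hq : ∀ i, 0 ≤ q i) (hm : ∀ i, 0 ≤ m i)
    (hq1 : ∑ i, q i = 1) (hm1 : ∑ i, m i ≤ 1) (hqm : ∀ i, 0 < q i → 0 < m i) :
    -∑ i, q i * Real.logb 2 (q i) ≤ -∑ i, q i * Real.logb 2 (m i) := by
  have hlog2 : (0:ℝ) < Real.log 2 := Real.log_pos (by norm_num)
  rw [neg_le_neg_iff]
  rw [← sub_nonpos, ← Finset.sum_sub_distrib]
  have key : ∀ i ∈ Finset.univ, q i * Real.logb 2 (m i) - q i * Real.logb 2 (q i) ≤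
      (if q i = 0 then 0 else (m i - q i) / Real.log 2) := by
    intro i _
    by_cases hqi : q i = 0
    · simp [hqi]
    · have hq' : 0 < q i := lt_of_le_of_ne (hq i) (Ne.symm hqi)
      have hm' : 0 < m i := hqm i hq'
      rw [if_neg hqi]
      have e1 : q i * Real.logb 2 (m i) - q i * Real.logb 2 (q i)
          = q i * Real.log (m i / q i) / Real.log 2 := by
        rw [Real.log_div hm'.ne' hq'.ne', Real.logb, Real.logb]; ring
      rw [e1]
      have h1 : Real.log (m i / q i) ≤ m i / q i - 1 :=
        Real.log_le_sub_one_of_pos (div_pos hm' hq')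
      have e2 : q i * Real.log (m i / q i) ≤ m i - q i := by
        calc q i * Real.log (m i / q i) ≤ q i * (m i / q i - 1) :=
              mul_le_mul_of_nonneg_left h1 hq'.le
          _ = m i - q i := by field_simp
      exact div_le_div_of_nonneg_right e2 hlog2.le
  calc ∑ i, (q i * Real.logb 2 (m i) - q i * Real.logb 2 (q i))
      ≤ ∑ i, (if q i = 0 then 0 else (m i - q i) / Real.log 2) :=
        Finset.sum_le_sum key
    _ = (∑ i ∈ Finset.univ.filter (fun i => ¬ q i = 0), (m i - q i)) / Real.log 2 := by
        rw [Finset.sum_ite, Finset.sum_div]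
        simp
    _ ≤ 0 := by
        apply div_nonpos_of_nonpos_of_nonneg _ hlog2.le
        rw [Finset.sum_sub_distrib, sub_nonpos]
        have h2 : ∑ i ∈ Finset.univ.filter (fun i => ¬ q i = 0), q i = 1 := by
          rw [← hq1]
          exact Finset.sum_filter_of_ne (fun i _ h => h)
        rw [h2, ← hq1] at *
        calc ∑ i ∈ Finset.univ.filter (fun i => ¬ q i = 0), m i
            ≤ ∑ i, m i := Finset.sum_le_sum_of_subset_of_nonneg (Finset.filter_subset _ _)
              (fun i _ _ => hm i)
          _ ≤ ∑ i, q i := by rw [hq1]; exact hm1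
end gibbs

section bounds
variable {Ω α γ : Type*} [Fintype Ω] [Fintype α] [Fintype γ]
  [DecidableEq α] [DecidableEq γ] (p : Ω → ℝ)

lemma nonempty_of_sum_one (hp1 : ∑ ω, p ω = 1) : Nonempty Ω := by
  rcases isEmpty_or_nonempty Ω with h | h
  · simp [Finset.univ_eq_empty] at hp1
  · exact h

lemma entropy_le_card (hp : ∀ ω, 0 ≤ p ω) (hp1 : ∑ ω, p ω = 1) (X : Ω → α) :
    entropy p X ≤ Real.logb 2 (Fintype.card α) := by
  have hΩ : Nonempty Ω := nonempty_of_sum_one p hp1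
  have hα : Nonempty α := ⟨X (Classical.arbitrary Ω)⟩
  have hcard : (0:ℝ) < Fintype.card α := by positivity
  have hsum : ∑ a, probOf p X a = 1 := by rw [sum_probOf]; exact hp1
  have := gibbs (probOf p X) (fun _ => (Fintype.card α : ℝ)⁻¹)
    (probOf_nonneg p hp X) (fun _ => by positivity) hsum
    (by rw [Finset.sum_const, Finset.card_univ, nsmul_eq_mul]
        rw [mul_inv_cancel₀ hcard.ne']) (fun _ _ => by positivity)
  refine (this.trans_eq ?_)
  rw [← Finset.sum_mul, hsum, one_mul, Real.logb_inv, neg_neg]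

lemma entropy_pair_le_card (hp : ∀ ω, 0 ≤ p ω) (hp1 : ∑ ω, p ω = 1)
    (X : Ω → α) (Z : Ω → γ) :
    entropy p (fun ω => (X ω, Z ω)) ≤ entropy p Z + Real.logb 2 (Fintype.card α) := by
  have hΩ : Nonempty Ω := nonempty_of_sum_one p hp1
  have hα : Nonempty α := ⟨X (Classical.arbitrary Ω)⟩
  have hcard : (0:ℝ) < Fintype.card α := by positivity
  set q := probOf p (fun ω => (X ω, Z ω)) with hqdef
  set r := probOf p Z with hrdef
  have hmarg : ∀ z, ∑ a, q (a, z) = r z := by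
    intro z
    unfold q r
    unfold probOf
    rw [Finset.sum_comm]
    refine Finset.sum_congr rfl fun ω _ => ?_
    by_cases hz : Z ω = z
    · simp [hz, Prod.ext_iff]
    · simp [hz, Prod.ext_iff]
  have hsumq : ∑ az, q az = 1 := by rw [hqdef, sum_probOf]; exact hp1
  have hsumr : ∑ z, r z = 1 := by rw [hrdef, sum_probOf]; exact hp1
  have hqpos := probOf_nonneg p hp (fun ω => (X ω, Z ω))
  have hrpos := probOf_nonneg p hp Z
  have hbd := gibbs q (fun az => r az.2 / Fintype.card α) hqpos
    (fun az => by have := hrpos az.2; positivity)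
    hsumq
    (by rw [Fintype.sum_prod_type_right]
        simp only [Finset.sum_const, Finset.card_univ, nsmul_eq_mul]
        have hz : ∀ z : γ, (Fintype.card α : ℝ) * (r z / Fintype.card α) = r z :=
          fun z => by field_simp
        rw [Finset.sum_congr rfl fun z _ => hz z, hsumr])
    (fun az hq0 => by
      have : q az ≤ r az.2 := by
        rw [← hmarg az.2]
        exact Finset.single_le_sum (fun a _ => hqpos (a, az.2)) (Finset.mem_univ az.1)
      have : 0 < r az.2 := lt_of_lt_of_le hq0 this
      positivity)
  refine le_trans hbd ?_
  have step : ∀ az : α × γ, q az * Real.logb 2 (r az.2 / Fintype.card α)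
      = q az * Real.logb 2 (r az.2) - q az * Real.logb 2 (Fintype.card α) := by
    intro az
    by_cases hq0 : q az = 0
    · simp [hq0]
    · have hq' : 0 < q az := lt_of_le_of_ne (hqpos az) (Ne.symm hq0)
      have hr' : 0 < r az.2 := by
        have : q az ≤ r az.2 := by
          rw [← hmarg az.2]
          exact Finset.single_le_sum (fun a _ => hqpos (a, az.2)) (Finset.mem_univ az.1)
        linarith
      rw [Real.logb_div hr'.ne' hcard.ne', mul_sub]
  rw [Finset.sum_congr rfl (fun az _ => step az)]
  rw [Finset.sum_sub_distrib, ← Finset.sum_mul, hsumq, one_mul, neg_sub]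
  have hgrp : ∑ az : α × γ, q az * Real.logb 2 (r az.2) = ∑ z, r z * Real.logb 2 (r z) := by
    rw [Fintype.sum_prod_type_right]
    refine Finset.sum_congr rfl fun z _ => ?_
    have h' : ∑ x : α, q (x, z) * Real.logb 2 (r z) = r z * Real.logb 2 (r z) := by
      rw [← Finset.sum_mul, hmarg z]
    simpa using h'
  rw [hgrp]
  unfold entropy
  ring_nf
  exact le_refl _
end bounds

section chain
variable {Ω ζ : Type*} [Fintype Ω] [Fintype ζ] [DecidableEq ζ]

lemma chain_bound (p : Ω → ℝ) (k : ℕ) (T : Fin k → Ω → Bool) (Z : Ω → ζ) (δ : ℝ)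
    (hH : ∀ i : Fin k, 1 - δ ≤
      condEntropy p (T i)
        (fun ω => ((fun j : Fin i.val => T (Fin.castLE i.isLt.le j) ω), Z ω))) :
    ∀ n, (h : n ≤ k) →
      entropy p Z + n * (1 - δ) ≤
        entropy p (fun ω => ((fun j : Fin n => T (Fin.castLE h j) ω), Z ω)) := by
  intro n
  induction n with
  | zero =>
    intro h
    have hf : Function.Injective (fun z : ζ => ((fun j : Fin 0 => j.elim0), z) :
        ζ → (Fin 0 → Bool) × ζ) := fun a b hab => congrArg Prod.snd hab
    have he : (fun ω => ((fun j : Fin 0 => T (Fin.castLE h j) ω), Z ω))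
        = fun ω => ((fun j : Fin 0 => j.elim0), Z ω) := by
      funext ω; exact congrArg (·, Z ω) (funext fun j => j.elim0)
    rw [he]
    rw [entropy_comp p hf Z]
    simp
  | succ n ih =>
    intro h
    have hn : n ≤ k := Nat.le_of_succ_le h
    have hnk : n < k := h
    set i : Fin k := ⟨n, hnk⟩ with hi
    set V : Ω → (Fin n → Bool) × ζ :=
      fun ω => ((fun j : Fin n => T (Fin.castLE hn j) ω), Z ω) with hV
    have hf : Function.Injective (fun x : Bool × ((Fin n → Bool) × ζ) =>
        ((Fin.snoc x.2.1 x.1 : Fin (n+1) → Bool), x.2.2)) := by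
      rintro ⟨b, t, z⟩ ⟨b', t', z'⟩ heq
      have h1 : (Fin.snoc t b : Fin (n+1) → Bool) = Fin.snoc t' b' :=
        congrArg Prod.fst heq
      have hb : b = b' := by
        have := congrFun h1 (Fin.last n); simpa using this
      have ht : t = t' := by
        funext j
        have := congrFun h1 j.castSucc; simpa using this
      have hz : z = z' := congrArg Prod.snd heq
      simp [hb, ht, hz]
    have he : (fun ω => ((fun j : Fin (n+1) => T (Fin.castLE h j) ω), Z ω))
        = fun ω => ((Fin.snoc (V ω).1 (T i ω) : Fin (n+1) → Bool), (V ω).2) := by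
      funext ω
      refine Prod.ext ?_ rfl
      funext j
      refine Fin.lastCases ?_ (fun j' => ?_) j
      · have : Fin.castLE h (Fin.last n) = i := by
          apply Fin.ext; simp [hi]
        simp [this]
      · have : Fin.castLE h j'.castSucc = Fin.castLE hn j' := by
          apply Fin.ext; simp
        simp [this, Fin.snoc_castSucc, hV]
    have hent : entropy p (fun ω => ((fun j : Fin (n+1) => T (Fin.castLE h j) ω), Z ω))
        = entropy p (fun ω => (T i ω, V ω)) := by
      rw [he]
      exact entropy_comp p hf (fun ω => (T i ω, V ω))
    have hcond : 1 - δ ≤ condEntropy p (T i) V := hH i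
    have hVbound := ih hn
    unfold condEntropy at hcond
    have : entropy p Z + n * (1 - δ) ≤ entropy p V := hVbound
    rw [hent]
    push_cast
    linarith
end chain

/-- If `H(T_i | T_1,...,T_{i-1}, Z) ≥ 1 - δ` for every `i`, then for every
subset `A` of the index set, `I(T[Aᶜ]; (T[A], Z)) ≤ k·δ`. -/
theorem mutualInfo_subtuple_le {Ω ζ : Type*} [Fintype Ω] [Fintype ζ] [DecidableEq ζ]
    (p : Ω → ℝ) (hp : ∀ ω, 0 ≤ p ω) (hp1 : ∑ ω, p ω = 1)
    (k : ℕ) (T : Fin k → Ω → Bool) (Z : Ω → ζ) (δ : ℝ) (hδ : 0 ≤ δ)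
    (hH : ∀ i : Fin k, 1 - δ ≤
      condEntropy p (T i)
        (fun ω => ((fun j : Fin i.val => T (Fin.castLE i.isLt.le j) ω), Z ω)))
    (A : Finset (Fin k)) :
    mutualInfo p
      (fun ω => (fun i : {x : Fin k // x ∈ Aᶜ} => T i.1 ω))
      (fun ω => ((fun i : {x : Fin k // x ∈ A} => T i.1 ω), Z ω)) ≤ k * δ := by
  classical
  set X : Ω → ({x : Fin k // x ∈ Aᶜ} → Bool) :=
    fun ω => (fun i : {x : Fin k // x ∈ Aᶜ} => T i.1 ω) with hX
  set Y : Ω → ({x : Fin k // x ∈ A} → Bool) × ζ :=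
    fun ω => ((fun i : {x : Fin k // x ∈ A} => T i.1 ω), Z ω) with hY
  -- cardinalities
  have hcardX : (Fintype.card ({x : Fin k // x ∈ Aᶜ} → Bool) : ℝ) = 2 ^ Aᶜ.card := by
    rw [Fintype.card_fun, Fintype.card_bool, Fintype.card_coe]; push_cast; ring
  have hcardA : (Fintype.card ({x : Fin k // x ∈ A} → Bool) : ℝ) = 2 ^ A.card := by
    rw [Fintype.card_fun, Fintype.card_bool, Fintype.card_coe]; push_cast; ring
  have hlogpow : ∀ m : ℕ, Real.logb 2 ((2:ℝ) ^ m) = m := fun m => by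
    rw [Real.logb, Real.log_pow]
    field_simp
  -- bound on H(X)
  have hHX : entropy p X ≤ (Aᶜ.card : ℝ) := by
    have := entropy_le_card p hp hp1 X
    rwa [hcardX, hlogpow] at this
  -- bound on H(Y)
  have hHY : entropy p Y ≤ entropy p Z + (A.card : ℝ) := by
    have := entropy_pair_le_card p hp hp1
      (fun ω => (fun i : {x : Fin k // x ∈ A} => T i.1 ω)) Z
    rwa [hcardA, hlogpow] at this
  -- joint entropy lower bound
  have hjoint : entropy p Z + k * (1 - δ) ≤ entropy p (fun ω => (X ω, Y ω)) := by
    have hf : Function.Injective (fun tz : (Fin k → Bool) × ζ =>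
        (((fun i : {x : Fin k // x ∈ Aᶜ} => tz.1 i.1),
          ((fun i : {x : Fin k // x ∈ A} => tz.1 i.1), tz.2)) :
          ({x : Fin k // x ∈ Aᶜ} → Bool) × (({x : Fin k // x ∈ A} → Bool) × ζ))) := by
      rintro ⟨t, z⟩ ⟨t', z'⟩ heq
      have h1 := congrArg Prod.fst heq
      have h2 := congrArg (fun x => x.2.1) heq
      have h3 : z = z' := congrArg (fun x => x.2.2) heq
      simp only at h1 h2 h3
      have ht : t = t' := by
        funext i
        by_cases hi : i ∈ A
        · exact congrFun h2 ⟨i, hi⟩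
        · exact congrFun h1 ⟨i, Finset.mem_compl.2 hi⟩
      simp [ht, h3]
    have he : (fun ω => (X ω, Y ω))
        = fun ω => (((fun i : {x : Fin k // x ∈ Aᶜ} => T i.1 ω),
            ((fun i : {x : Fin k // x ∈ A} => T i.1 ω), Z ω))) := rfl
    have hce : entropy p (fun ω => (X ω, Y ω))
        = entropy p (fun ω => ((fun i : Fin k => T i ω), Z ω)) := by
      rw [he]
      exact entropy_comp p hf (fun ω => ((fun i : Fin k => T i ω), Z ω))
    rw [hce]
    have := chain_bound p k T Z δ hH k le_rfl
    exact this
  -- arithmetic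
  have hcardAC : (Aᶜ.card : ℝ) = k - A.card := by
    rw [Finset.card_compl]
    rw [Nat.cast_sub (Finset.card_le_univ A)]
    simp
  unfold mutualInfo
  rw [hcardAC] at hHX
  linarith
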